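/- If r is a square root on a pseudo MV-algebra M, then r(0) = max{x ∧ x⁻ : x ∈ M} = max{x ∧ x∼ : x ∈ M}. -/

import Mathlib

/-!
Since `r 0 ⊙ r 0 = 0`, the element `a = r 0` lies below both `a⁻` and `a∼`, so `a ∧ a⁻ = a`
and `a ∧ a∼ = a`: the maxima are attained at `a`. Conversely `z = x ∧ x⁻` lies below `x` and `x⁻`,
so `z ⊙ z ≤ x ⊙ x⁻ = 0`, and (Sq2) gives `z ≤ r 0`; likewise for `x ∧ x∼` via `x∼ ⊙ x = 0`.
-/

/-- A pseudo MV-algebra `(M; ⊕, ⁻, ∼, 0, 1)` satisfying axioms (A1)–(A8),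
with `x ⊙ y := (y⁻ ⊕ x⁻)∼`. -/
class PseudoMV (M : Type*) where
  oplus : M → M → M
  lneg : M → M
  rneg : M → M
  zero : M
  one : M
  oplus_assoc : ∀ x y z : M, oplus x (oplus y z) = oplus (oplus x y) z
  oplus_zero : ∀ x : M, oplus x zero = x
  zero_oplus : ∀ x : M, oplus zero x = x
  oplus_one : ∀ x : M, oplus x one = one
  one_oplus : ∀ x : M, oplus one x = one
  lneg_one : lneg one = zero
  rneg_one : rneg one = zero
  a5 : ∀ x y : M, rneg (oplus (lneg x) (lneg y)) = lneg (oplus (rneg x) (rneg y))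
  a6₁ : ∀ x y : M,
    oplus x (rneg (oplus (lneg y) (lneg (rneg x)))) =
      oplus y (rneg (oplus (lneg x) (lneg (rneg y))))
  a6₂ : ∀ x y : M,
    oplus x (rneg (oplus (lneg y) (lneg (rneg x)))) =
      oplus (rneg (oplus (lneg (lneg y)) (lneg x))) y
  a6₃ : ∀ x y : M,
    oplus x (rneg (oplus (lneg y) (lneg (rneg x)))) =
      oplus (rneg (oplus (lneg (lneg x)) (lneg y))) x
  a7 : ∀ x y : M,
    rneg (oplus (lneg (oplus (lneg x) y)) (lneg x)) =
      rneg (oplus (lneg y) (lneg (oplus x (rneg y))))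
  a8 : ∀ x : M, rneg (lneg x) = x

namespace PseudoMV

variable {M : Type*} [PseudoMV M]

/-- `x ⊙ y := (y⁻ ⊕ x⁻)∼`. -/
def mul (x y : M) : M := rneg (oplus (lneg y) (lneg x))

/-- `x ∨ y = x ⊕ (x∼ ⊙ y)` (axiom (A6)). -/
def sup (x y : M) : M := oplus x (mul (rneg x) y)

/-- `x ∧ y = x ⊙ (x⁻ ⊕ y)` (axiom (A7)). -/
def inf (x y : M) : M := mul x (oplus (lneg x) y)

/-- The lattice order of a pseudo MV-algebra. -/
def le (x y : M) : Prop := sup x y = y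

/-- `x → y := x⁻ ⊕ y`. -/
def arrow (x y : M) : M := oplus (lneg x) y

/-- `x ⇝ y := y ⊕ x∼`. -/
def squig (x y : M) : M := oplus y (rneg x)

/-- A weak square root: (Sq1) and (Sq2). -/
def IsWeakSqrt (r : M → M) : Prop :=
  (∀ x : M, mul (r x) (r x) = x) ∧
  (∀ x y : M, le (mul y y) x → le y (r x))

/-- A square root: (Sq1), (Sq2) and (Sq3). -/
def IsSqrt (r : M → M) : Prop :=
  IsWeakSqrt r ∧
  (∀ x : M, r (lneg x) = arrow (r x) (r zero) ∧ r (rneg x) = squig (r x) (r zero))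

lemma lneg_rneg (x : M) : lneg (rneg x) = x := by
  have h := a5 x (one : M)
  rw [lneg_one, oplus_zero, rneg_one, oplus_zero, a8] at h
  exact h.symm

lemma lneg_zero : lneg (zero : M) = one := by
  rw [← rneg_one, lneg_rneg]

lemma rneg_zero : rneg (zero : M) = one := by
  rw [← lneg_one, a8]

lemma oplus_rneg_self (x : M) : oplus x (rneg x) = one := by
  have h := a6₂ x (one : M)
  rwa [lneg_one, zero_oplus, a8, oplus_one] at h

lemma lneg_oplus_self (x : M) : oplus (lneg x) x = one := by
  have h := a6₃ x (one : M)
  rw [lneg_one, zero_oplus, a8, oplus_zero, a8, oplus_rneg_self] at h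
  exact h.symm

lemma mul_one (x : M) : mul x one = x := by
  rw [mul, lneg_one, zero_oplus, a8]

lemma mul_lneg_self (x : M) : mul x (lneg x) = zero := by
  rw [mul, lneg_oplus_self, rneg_one]

lemma mul_rneg_self (x : M) : mul (rneg x) x = zero := by
  rw [mul, lneg_rneg, lneg_oplus_self, rneg_one]

lemma le_iff_lneg_oplus_eq_one {x y : M} : le x y ↔ oplus (lneg x) y = one := by
  constructor
  · intro h
    rw [← show sup x y = y from h, sup, oplus_assoc, lneg_oplus_self, one_oplus]
  · intro h
    rw [le, sup, mul, a6₁ x y, lneg_rneg, h, rneg_one, oplus_zero]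

lemma le_iff_oplus_rneg_eq_one {x y : M} : le x y ↔ oplus y (rneg x) = one := by
  constructor
  · intro h
    rw [le, sup, mul, a6₃ x y] at h
    rw [← h, ← oplus_assoc, oplus_rneg_self, oplus_one]
  · intro h
    have h5 := a5 (lneg y) x
    rw [a8] at h5
    rw [le, sup, mul, a6₂ x y, h5, h, lneg_one, zero_oplus]

lemma le_trans {x y z : M} (hxy : le x y) (hyz : le y z) : le x z := by
  rw [le_iff_lneg_oplus_eq_one, ← show sup y z = z from hyz, sup, oplus_assoc,
    le_iff_lneg_oplus_eq_one.1 hxy, one_oplus]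

lemma le_oplus_right (x y : M) : le x (oplus x y) := by
  rw [le_iff_lneg_oplus_eq_one, oplus_assoc, lneg_oplus_self, one_oplus]

lemma le_oplus_left (x y : M) : le x (oplus y x) := by
  rw [le_iff_oplus_rneg_eq_one, ← oplus_assoc, oplus_rneg_self, oplus_one]

lemma oplus_le_oplus_left {x y : M} (u : M) (h : le x y) : le (oplus u x) (oplus u y) := by
  rw [← show sup x y = y from h, sup, oplus_assoc]
  exact le_oplus_right _ _

lemma oplus_le_oplus_right {x y : M} (u : M) (h : le x y) : le (oplus x u) (oplus y u) := by
  have hy : oplus (rneg (oplus (lneg (lneg x)) (lneg y))) x = y := by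
    rw [← a6₃ x y]; exact h
  rw [← hy, ← oplus_assoc]
  exact le_oplus_left _ _

lemma lneg_le_lneg {x y : M} (h : le x y) : le (lneg y) (lneg x) := by
  rw [le_iff_oplus_rneg_eq_one, a8]
  exact le_iff_lneg_oplus_eq_one.1 h

lemma rneg_le_rneg {x y : M} (h : le x y) : le (rneg y) (rneg x) := by
  rw [le_iff_lneg_oplus_eq_one, lneg_rneg]
  exact le_iff_oplus_rneg_eq_one.1 h

lemma mul_le_mul_right {x y : M} (u : M) (h : le x y) : le (mul x u) (mul y u) :=
  rneg_le_rneg (oplus_le_oplus_left _ (lneg_le_lneg h))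

lemma mul_le_mul_left {x y : M} (u : M) (h : le x y) : le (mul u x) (mul u y) :=
  rneg_le_rneg (oplus_le_oplus_right _ (lneg_le_lneg h))

lemma mul_self_le_mul {x y z : M} (hx : le z x) (hy : le z y) : le (mul z z) (mul x y) :=
  le_trans (mul_le_mul_right _ hx) (mul_le_mul_left _ hy)

lemma le_lneg_of_mul_eq_zero {x y : M} (h : mul x y = zero) : le y (lneg x) := by
  rw [le_iff_lneg_oplus_eq_one, ← lneg_zero, ← h, mul, lneg_rneg]

lemma le_rneg_of_mul_eq_zero {x y : M} (h : mul x y = zero) : le x (rneg y) := by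
  rw [le_iff_oplus_rneg_eq_one, ← rneg_zero, ← h, mul, a5, a8]

lemma inf_le_left (x y : M) : le (inf x y) x := by
  rw [le_iff_lneg_oplus_eq_one, inf, mul, lneg_rneg, ← oplus_assoc, lneg_oplus_self, oplus_one]

lemma inf_le_right (x y : M) : le (inf x y) y := by
  rw [le_iff_lneg_oplus_eq_one, inf, mul, lneg_rneg, ← oplus_assoc, lneg_oplus_self]

lemma inf_eq_left {x y : M} (h : le x y) : inf x y = x := by
  rw [inf, le_iff_lneg_oplus_eq_one.1 h, mul_one]

lemma mul_self_inf_lneg_le_zero (x : M) :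
    le (mul (inf x (lneg x)) (inf x (lneg x))) zero :=
  mul_lneg_self x ▸ mul_self_le_mul (inf_le_left _ _) (inf_le_right _ _)

lemma mul_self_inf_rneg_le_zero (x : M) :
    le (mul (inf x (rneg x)) (inf x (rneg x))) zero :=
  mul_rneg_self x ▸ mul_self_le_mul (inf_le_right _ _) (inf_le_left _ _)

end PseudoMV

open PseudoMV

theorem stmt10 {M : Type*} [PseudoMV M] (r : M → M) (hr : IsSqrt r) :
    ((∀ x : M, le (inf x (lneg x)) (r zero)) ∧ (∃ x : M, inf x (lneg x) = r zero)) ∧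
    ((∀ x : M, le (inf x (rneg x)) (r zero)) ∧ (∃ x : M, inf x (rneg x) = r zero)) := by
  obtain ⟨⟨hsq, hle⟩, -⟩ := hr
  have hsq0 : mul (r zero) (r zero) = zero := hsq zero
  exact ⟨⟨fun x => hle _ _ (mul_self_inf_lneg_le_zero x),
      r zero, inf_eq_left (le_lneg_of_mul_eq_zero hsq0)⟩,
    ⟨fun x => hle _ _ (mul_self_inf_rneg_le_zero x),
      r zero, inf_eq_left (le_rneg_of_mul_eq_zero hsq0)⟩⟩
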